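/- arXiv:1302.3673 — 2 statements merged into one kernel-verified Lean document; each statement's English description precedes it below -/
import Mathlib

section
/- Complementary-dual principle in the double-well example: if σ̄ ∈ ℝ, σ̄ ≠ 0, satisfies the dual algebraic equation (α⁻¹σ̄ + λ)σ̄² = ½‖f‖², then x̄ = σ̄⁻¹ f is a critical point of Π (i.e. ∇Π(x̄) = 0) and Π(x̄) = Π^d(σ̄). -/
/-!
The dual algebraic equation says exactly that `x̄ = σ⁻¹ f` and `σ` are linked by the
constitutive law `σ = α (½‖x̄‖² − λ)`. Since `∇Π(x) = α (½‖x‖² − λ) x − f`, this gives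
`∇Π(x̄) = σ x̄ − f = 0`, and substituting `‖f‖² = 2 (α⁻¹σ + λ) σ²` into `Π(x̄)` yields `Π^d(σ)`.
-/

open scoped RealInnerProductSpace

noncomputable section

namespace DoubleWell

variable {E : Type*} [NormedAddCommGroup E] [InnerProductSpace ℝ E]

def energy (α lam : ℝ) (f x : E) : ℝ :=
  (1/2) * α * ((1/2) * ‖x‖ ^ 2 - lam) ^ 2 - ⟪x, f⟫

def dualEnergy (α lam : ℝ) (f : E) (σ : ℝ) : ℝ :=
  -(‖f‖ ^ 2 / (2 * σ)) - (1/2) * α⁻¹ * σ ^ 2 - lam * σ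

theorem hasFDerivAt_energy (α lam : ℝ) (f x : E) :
    HasFDerivAt (energy α lam f)
      (innerSL ℝ ((α * ((1/2) * ‖x‖ ^ 2 - lam)) • x - f)) x := by
  have hquad := ((hasStrictFDerivAt_norm_sq x).hasFDerivAt.const_mul (1/2 : ℝ)).sub_const lam
  have hlin := (hasFDerivAt_id x).inner ℝ (hasFDerivAt_const f x)
  refine (((hquad.pow 2).const_mul ((1/2) * α)).sub hlin).congr_fderiv ?_
  ext v
  simp only [one_div, Nat.add_one_sub_one, pow_one, nsmul_eq_mul, Nat.cast_ofNat, id_eq,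
    sub_apply, smul_apply, coe_innerSL_apply, smul_eq_mul,
    ne_eq, OfNat.ofNat_ne_zero, not_false_eq_true, inv_mul_cancel_left₀,
    ContinuousLinearMap.comp_apply, ContinuousLinearMap.prod_apply, ContinuousLinearMap.id_apply,
    zero_apply, fderivInnerCLM_apply, inner_zero_right, real_inner_comm f,
    zero_add, map_sub, map_smul]
  ring

theorem half_norm_sq_inv_smul_sub_eq {α lam σ : ℝ} {f : E} (hσ : σ ≠ 0)
    (hdual : (α⁻¹ * σ + lam) * σ ^ 2 = (1/2) * ‖f‖ ^ 2) :
    (1/2) * ‖σ⁻¹ • f‖ ^ 2 - lam = α⁻¹ * σ := by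
  rw [norm_smul, mul_pow, norm_inv, Real.norm_eq_abs, inv_pow, sq_abs]
  field_simp
  linear_combination -2 * hdual

theorem hasFDerivAt_energy_inv_smul_eq_zero {α lam σ : ℝ} {f : E} (hα : α ≠ 0) (hσ : σ ≠ 0)
    (hdual : (α⁻¹ * σ + lam) * σ ^ 2 = (1/2) * ‖f‖ ^ 2) :
    HasFDerivAt (energy α lam f) (0 : E →L[ℝ] ℝ) (σ⁻¹ • f) := by
  convert hasFDerivAt_energy α lam f (σ⁻¹ • f)
  rw [half_norm_sq_inv_smul_sub_eq hσ hdual, smul_smul, mul_inv_cancel_left₀ hα,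
    mul_inv_cancel₀ hσ, one_smul, sub_self, map_zero]

theorem energy_inv_smul_eq_dualEnergy {α lam σ : ℝ} {f : E} (hσ : σ ≠ 0)
    (hdual : (α⁻¹ * σ + lam) * σ ^ 2 = (1/2) * ‖f‖ ^ 2) :
    energy α lam f (σ⁻¹ • f) = dualEnergy α lam f σ := by
  rw [energy, half_norm_sq_inv_smul_sub_eq hσ hdual, real_inner_smul_left,
    real_inner_self_eq_norm_sq, dualEnergy]
  field_simp
  linear_combination 2 * hdual

end DoubleWell

end

theorem double_well_complementary_dual_general
    (n : ℕ) (α lam : ℝ) (hα : 0 < α)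
    (f : EuclideanSpace ℝ (Fin n)) (σ : ℝ) (hσ : σ ≠ 0)
    (hdual : (α⁻¹ * σ + lam) * σ ^ 2 = (1/2) * ‖f‖ ^ 2) :
    fderiv ℝ (fun x : EuclideanSpace ℝ (Fin n) =>
        (1/2) * α * ((1/2) * ‖x‖ ^ 2 - lam) ^ 2 - (inner ℝ x f : ℝ)) (σ⁻¹ • f) = 0
    ∧ (1/2) * α * ((1/2) * ‖σ⁻¹ • f‖ ^ 2 - lam) ^ 2 - (inner ℝ (σ⁻¹ • f) f : ℝ)
      = -(‖f‖ ^ 2 / (2 * σ)) - (1/2) * α⁻¹ * σ ^ 2 - lam * σ :=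
  ⟨(DoubleWell.hasFDerivAt_energy_inv_smul_eq_zero hα.ne' hσ hdual).fderiv,
    DoubleWell.energy_inv_smul_eq_dualEnergy hσ hdual⟩

/-- **Complementary-dual principle in the double-well example**: if `σ̄ ≠ 0`
satisfies the dual algebraic equation `(α⁻¹σ̄ + λ)σ̄² = ½‖f‖²`, then `x̄ = σ̄⁻¹ f`
is a critical point of `Π(x) = ½α(½‖x‖² − λ)² − ⟨x,f⟩` and `Π(x̄) = Π^d(σ̄)`,
where `Π^d(σ) = −‖f‖²/(2σ) − ½α⁻¹σ² − λσ`. -/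
theorem double_well_complementary_dual
    (n : ℕ) (hn : 1 ≤ n) (α lam : ℝ) (hα : 0 < α) (hlam : 0 < lam)
    (f : EuclideanSpace ℝ (Fin n)) (σ : ℝ) (hσ : σ ≠ 0)
    (hdual : (α⁻¹ * σ + lam) * σ ^ 2 = (1/2) * ‖f‖ ^ 2) :
    fderiv ℝ (fun x : EuclideanSpace ℝ (Fin n) =>
        (1/2) * α * ((1/2) * ‖x‖ ^ 2 - lam) ^ 2 - (inner ℝ x f : ℝ)) (σ⁻¹ • f) = 0
    ∧ (1/2) * α * ((1/2) * ‖σ⁻¹ • f‖ ^ 2 - lam) ^ 2 - (inner ℝ (σ⁻¹ • f) f : ℝ)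
      = -(‖f‖ ^ 2 / (2 * σ)) - (1/2) * α⁻¹ * σ ^ 2 - lam * σ :=
  double_well_complementary_dual_general n α lam hα f σ hσ hdual
end

section
/- Local maximizer via the smallest dual root (double-max duality instance): suppose σ₃ < σ₂ < 0 are two distinct negative roots of the dual algebraic equation (α⁻¹σ + λ)σ² = ½‖f‖². Then x₃ = σ₃⁻¹ f is a strict local maximizer of Π on ℝⁿ. -/
open Filter Topology

/-! For `x₃ = σ₃⁻¹ f` the dual equation says exactly `α(½‖x₃‖² − λ) = σ₃`, so `f = σ₃ x₃` and `x₃`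
is stationary for `Π`. Expanding around it gives the exact identity
`Π x − Π x₃ = ½α t² + ½σ₃‖x − x₃‖²` with `t = ½(‖x‖² − ‖x₃‖²)`. Since
`|t| ≤ ‖x − x₃‖ (‖x‖ + ‖x₃‖) / 2`, the difference is at most
`½‖x − x₃‖² (α ((‖x‖ + ‖x₃‖) / 2)² + σ₃)`, which is negative near `x₃` as soon as
`σ₃ + α‖x₃‖² = 3σ₃ + 2αλ < 0`. That inequality is what the second, larger negative root `σ₂`
provides: subtracting the two dual equations and dividing by `σ₂ − σ₃` gives
`(3σ₃ + 2αλ)(σ₂ + σ₃) = (σ₃ − σ₂)(σ₃ + 2σ₂) > 0`. -/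

theorem sq_norm_sq_sub_norm_sq_le {E : Type*} [SeminormedAddCommGroup E] (x y : E) :
    (‖x‖ ^ 2 - ‖y‖ ^ 2) ^ 2 ≤ ‖x - y‖ ^ 2 * (‖x‖ + ‖y‖) ^ 2 := by
  have h : (‖x‖ - ‖y‖) ^ 2 ≤ ‖x - y‖ ^ 2 := sq_le_sq.2 (by
    simpa [abs_of_nonneg (norm_nonneg (x - y))] using abs_norm_sub_norm_le x y)
  calc (‖x‖ ^ 2 - ‖y‖ ^ 2) ^ 2 = (‖x‖ - ‖y‖) ^ 2 * (‖x‖ + ‖y‖) ^ 2 := by ring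
    _ ≤ ‖x - y‖ ^ 2 * (‖x‖ + ‖y‖) ^ 2 := by gcongr

section DoubleWell

variable {E : Type*} [NormedAddCommGroup E] [InnerProductSpace ℝ E]

noncomputable def doubleWell (α lam : ℝ) (f x : E) : ℝ :=
  (1/2) * α * ((1/2) * ‖x‖ ^ 2 - lam) ^ 2 - inner ℝ x f

theorem doubleWell_sub_doubleWell {α lam σ : ℝ} {f x₀ : E}
    (hσ : α * ((1/2) * ‖x₀‖ ^ 2 - lam) = σ) (hf : f = σ • x₀) (x : E) :
    doubleWell α lam f x - doubleWell α lam f x₀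
      = (1/2) * α * ((‖x‖ ^ 2 - ‖x₀‖ ^ 2) / 2) ^ 2 + σ / 2 * ‖x - x₀‖ ^ 2 := by
  subst hf
  rw [doubleWell, doubleWell, norm_sub_sq_real, real_inner_smul_right, real_inner_smul_right,
    real_inner_self_eq_norm_sq, real_inner_comm x₀ x]
  linear_combination (-(‖x₀‖ ^ 2 - ‖x‖ ^ 2) / 2) * hσ

theorem doubleWell_eventually_lt {α lam σ : ℝ} {f x₀ : E} (hα : 0 ≤ α)
    (hσ : α * ((1/2) * ‖x₀‖ ^ 2 - lam) = σ) (hf : f = σ • x₀)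
    (hneg : σ + α * ‖x₀‖ ^ 2 < 0) :
    ∀ᶠ x in 𝓝[≠] x₀, doubleWell α lam f x < doubleWell α lam f x₀ := by
  have hnear : ∀ᶠ x in 𝓝 x₀, α * ((‖x‖ + ‖x₀‖) / 2) ^ 2 + σ < 0 := by
    have hcont : Continuous fun x : E => α * ((‖x‖ + ‖x₀‖) / 2) ^ 2 + σ := by fun_prop
    exact hcont.continuousAt.eventually_lt continuousAt_const (by linear_combination hneg)
  filter_upwards [nhdsWithin_le_nhds hnear, self_mem_nhdsWithin] with x hx hne
  have hpos : 0 < ‖x - x₀‖ := norm_pos_iff.2 (sub_ne_zero.2 hne)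
  have hbound := mul_le_mul_of_nonneg_left (sq_norm_sq_sub_norm_sq_le x x₀) hα
  rw [← sub_neg, doubleWell_sub_doubleWell hσ hf]
  calc (1/2) * α * ((‖x‖ ^ 2 - ‖x₀‖ ^ 2) / 2) ^ 2 + σ / 2 * ‖x - x₀‖ ^ 2
      ≤ ‖x - x₀‖ ^ 2 / 2 * (α * ((‖x‖ + ‖x₀‖) / 2) ^ 2 + σ) := by linarith
    _ < 0 := mul_neg_of_pos_of_neg (by positivity) hx

theorem mul_half_norm_inv_smul_sq_sub_eq {α lam σ : ℝ} {f : E} (hα : α ≠ 0) (hσ : σ ≠ 0)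
    (hdual : (α⁻¹ * σ + lam) * σ ^ 2 = (1/2) * ‖f‖ ^ 2) :
    α * ((1/2) * ‖σ⁻¹ • f‖ ^ 2 - lam) = σ := by
  have hf : ‖f‖ ^ 2 = 2 * ((α⁻¹ * σ + lam) * σ ^ 2) := by linarith
  rw [norm_smul, mul_pow, norm_inv, Real.norm_eq_abs, inv_pow, sq_abs, hf]
  field_simp
  ring

end DoubleWell

theorem three_mul_add_two_mul_neg_of_dual_roots {α lam σ₂ σ₃ : ℝ} (hα : α ≠ 0)
    (h32 : σ₃ < σ₂) (h20 : σ₂ < 0)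
    (heq : (α⁻¹ * σ₂ + lam) * σ₂ ^ 2 = (α⁻¹ * σ₃ + lam) * σ₃ ^ 2) :
    3 * σ₃ + 2 * α * lam < 0 := by
  have hquot : σ₂ ^ 2 + σ₂ * σ₃ + σ₃ ^ 2 + α * lam * (σ₂ + σ₃) = 0 := by
    refine (mul_eq_zero.1 ?_).resolve_left (sub_ne_zero.2 h32.ne')
    linear_combination α * heq - (σ₂ ^ 3 - σ₃ ^ 3) * mul_inv_cancel₀ hα
  have hprod : 0 < (3 * σ₃ + 2 * α * lam) * (σ₂ + σ₃) := by
    have h : (3 * σ₃ + 2 * α * lam) * (σ₂ + σ₃) = (σ₃ - σ₂) * (σ₃ + 2 * σ₂) := by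
      linear_combination 2 * hquot
    rw [h]
    exact mul_pos_of_neg_of_neg (by linarith) (by linarith)
  exact neg_of_mul_pos_left hprod (by linarith)

theorem double_well_local_maximizer_general
    (n : ℕ) (α lam : ℝ) (hα : 0 < α)
    (f : EuclideanSpace ℝ (Fin n)) (σ₂ σ₃ : ℝ)
    (h32 : σ₃ < σ₂) (h20 : σ₂ < 0)
    (hdual2 : (α⁻¹ * σ₂ + lam) * σ₂ ^ 2 = (1/2) * ‖f‖ ^ 2)
    (hdual3 : (α⁻¹ * σ₃ + lam) * σ₃ ^ 2 = (1/2) * ‖f‖ ^ 2) :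
    ∀ᶠ x in 𝓝[≠] (σ₃⁻¹ • f : EuclideanSpace ℝ (Fin n)),
      (1/2) * α * ((1/2) * ‖x‖ ^ 2 - lam) ^ 2 - (inner ℝ x f : ℝ)
        < (1/2) * α * ((1/2) * ‖σ₃⁻¹ • f‖ ^ 2 - lam) ^ 2 - (inner ℝ (σ₃⁻¹ • f) f : ℝ) := by
  have hσ₃ : σ₃ ≠ 0 := (h32.trans h20).ne
  have hstat := mul_half_norm_inv_smul_sq_sub_eq (f := f) hα.ne' hσ₃ hdual3
  have hf : f = σ₃ • σ₃⁻¹ • f := by rw [smul_inv_smul₀ hσ₃]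
  have hroots := three_mul_add_two_mul_neg_of_dual_roots hα.ne' h32 h20 (hdual2.trans hdual3.symm)
  exact doubleWell_eventually_lt hα.le hstat hf (by linear_combination hroots + 2 * hstat)

/-- **Local maximizer via the smallest dual root** (double-max duality instance):
if `σ₃ < σ₂ < 0` are two distinct negative roots of the dual algebraic equation
`(α⁻¹σ + λ)σ² = ½‖f‖²`, then `x₃ = σ₃⁻¹ f` is a strict local maximizer of
`Π(x) = ½α(½‖x‖² − λ)² − ⟨x,f⟩` on `ℝⁿ`. -/
theorem double_well_local_maximizer
    (n : ℕ) (hn : 1 ≤ n) (α lam : ℝ) (hα : 0 < α) (hlam : 0 < lam)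
    (f : EuclideanSpace ℝ (Fin n)) (σ₂ σ₃ : ℝ)
    (h32 : σ₃ < σ₂) (h20 : σ₂ < 0)
    (hdual2 : (α⁻¹ * σ₂ + lam) * σ₂ ^ 2 = (1/2) * ‖f‖ ^ 2)
    (hdual3 : (α⁻¹ * σ₃ + lam) * σ₃ ^ 2 = (1/2) * ‖f‖ ^ 2) :
    ∀ᶠ x in 𝓝[≠] (σ₃⁻¹ • f : EuclideanSpace ℝ (Fin n)),
      (1/2) * α * ((1/2) * ‖x‖ ^ 2 - lam) ^ 2 - (inner ℝ x f : ℝ)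
        < (1/2) * α * ((1/2) * ‖σ₃⁻¹ • f‖ ^ 2 - lam) ^ 2 - (inner ℝ (σ₃⁻¹ • f) f : ℝ) :=
  double_well_local_maximizer_general n α lam hα f σ₂ σ₃ h32 h20 hdual2 hdual3
end
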